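/- Let T = {t_1, …, t_m} be a tree ensemble with m odd and ψ_p(T) > 2k, and let x ∈ ℝ^d be an instance with label y = T(x). For each tree t ∈ T that admits some attack within budget k (i.e., some δ with ‖δ‖_p ≤ k and t(x + δ) ≠ y), let Δ_t denote the minimum L_p norm of such an attack. Suppose there EXISTS a subset S ⊆ T with |S| = (m−1)/2 + 1 such that every tree in S admits an attack within budget k and ⊕_{t ∈ S} Δ_t ≤ k. Then T is not stable on x for the attacker A_{p,k}, i.e., there exists z ∈ A_{p,k}(x) with T(z) ≠ y. -/
import Mathlib


open scoped Classical

/-- The kinds of norms considered: `L0` (number of nonzero components),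
`Lp` for an integer `p ≥ 1` (represented by a positive natural), and `L∞`. -/
inductive PNorm : Type where
  | L0 : PNorm
  | Lp : ℕ+ → PNorm
  | Linf : PNorm

/-- The `p`-norm of a vector `δ ∈ ℝ^d`: for `L0`, the number of nonzero components;
for `Lp` with integer `p ≥ 1`, `(∑ i, |δ i| ^ p) ^ (1/p)`; for `L∞`, `max_i |δ i|`. -/
noncomputable def pnorm {d : ℕ} (p : PNorm) (δ : Fin d → ℝ) : ℝ :=
  match p with
  | .L0 => ((Finset.univ.filter fun i => δ i ≠ 0).card : ℝ)
  | .Lp n => (∑ i, |δ i| ^ (n : ℕ)) ^ (((n : ℕ) : ℝ)⁻¹)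
  | .Linf => ⨆ i, |δ i|

/-- The corresponding norm on scalars: for `L0`, `0` if the scalar is `0` and `1`
otherwise; for `Lp` and `L∞`, the absolute value. -/
noncomputable def scalarNorm (p : PNorm) (a : ℝ) : ℝ :=
  match p with
  | .L0 => if a = 0 then 0 else 1
  | _ => |a|

/-- A binary decision tree over `ℝ^d` with labels in `{+1, -1}` (encoded as `Bool`,
`true` for `+1` and `false` for `-1`). -/
inductive DTree (d : ℕ) : Type where
  | leaf (y : Bool) : DTree d
  | node (f : Fin d) (v : ℝ) (tl tr : DTree d) : DTree d

/-- The prediction of a decision tree on `x ∈ ℝ^d`: at `σ(f, v, tl, tr)` descend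
into `tl` if `x f ≤ v` and into `tr` otherwise; at a leaf, return its label. -/
noncomputable def DTree.pred {d : ℕ} : DTree d → (Fin d → ℝ) → Bool
  | .leaf y, _ => y
  | .node f v tl tr, x => if x f ≤ v then tl.pred x else tr.pred x

/-- `t.hasNode f v` holds iff `t` contains an internal node `σ(f, v)` testing
feature `f` with threshold `v`. -/
def DTree.hasNode {d : ℕ} : DTree d → Fin d → ℝ → Prop
  | .leaf _, _, _ => False
  | .node f v tl tr, f', v' => (f = f' ∧ v = v') ∨ tl.hasNode f' v' ∨ tr.hasNode f' v'

/-- The attacker `A_{p,k}` maps `x ∈ ℝ^d` to the set of its adversarial manipulations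
`A_{p,k}(x) = {z : ‖z − x‖_p ≤ k}`. -/
def attacker {d : ℕ} (p : PNorm) (k : ℝ) (x : Fin d → ℝ) : Set (Fin d → ℝ) :=
  {z | pnorm p (z - x) ≤ k}

/-- The large-spread condition `ψ_p(T) > 2k`: for every two internal nodes `σ(f, v)`
and `σ(f, v')` testing the same feature `f` in two distinct trees of `T`, the scalar
norm `‖v − v'‖_p` exceeds `2k`. -/
def LargeSpread {d : ℕ} (p : PNorm) (k : ℝ) (T : Finset (DTree d)) : Prop :=
  ∀ t ∈ T, ∀ t' ∈ T, t ≠ t' →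
    ∀ f v v', t.hasNode f v → t'.hasNode f v' → 2 * k < scalarNorm p (v - v')

/-- The support of `δ ∈ ℝ^d`: the set of coordinates where `δ` is nonzero. -/
def supp {d : ℕ} (δ : Fin d → ℝ) : Set (Fin d) := {i | δ i ≠ 0}

/-- `δ` is a minimal attack against the tree `t` on the instance `x` with label `y`
and budget `k`: `δ` has minimum `L_p` norm among all `δ'` with `‖δ'‖_p ≤ k` and
`t(x + δ') ≠ y`. -/
def MinimalAttack {d : ℕ} (p : PNorm) (k : ℝ) (t : DTree d) (x : Fin d → ℝ)
    (y : Bool) (δ : Fin d → ℝ) : Prop :=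
  pnorm p δ ≤ k ∧ t.pred (x + δ) ≠ y ∧
    ∀ δ' : Fin d → ℝ, pnorm p δ' ≤ k → t.pred (x + δ') ≠ y → pnorm p δ ≤ pnorm p δ'

/-- A classifier `g` is stable on `x` for the attacker `A` iff `g z = g x` for
all `z ∈ A x`. -/
def Stable {d : ℕ} (g : (Fin d → ℝ) → Bool) (A : (Fin d → ℝ) → Set (Fin d → ℝ))
    (x : Fin d → ℝ) : Prop :=
  ∀ z ∈ A x, g z = g x

/-- A classifier `g` is robust on `x` (with true label `y`) for the attacker `A`
iff `g x = y` and `g` is stable on `x` for `A`. -/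
def Robust {d : ℕ} (g : (Fin d → ℝ) → Bool) (A : (Fin d → ℝ) → Set (Fin d → ℝ))
    (x : Fin d → ℝ) (y : Bool) : Prop :=
  g x = y ∧ Stable g A x

/-- The prediction of a tree ensemble `T` (a finite set of decision trees, with an odd
number of trees) on `x`, by majority voting over the individual tree predictions. -/
noncomputable def ensPred {d : ℕ} (T : Finset (DTree d)) (x : Fin d → ℝ) : Bool :=
  decide (T.card < 2 * (T.filter fun t => t.pred x = true).card)

/-- The combination operator `⊕` on nonnegative reals indexed by a finite set `S`:
`∑` for `L0`, `(∑ Δ_t^p)^(1/p)` for `Lp` with integer `p ≥ 1`, and `max` for `L∞`. -/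
noncomputable def combine {X : Type*} (p : PNorm) (S : Finset X) (Δ : X → ℝ) : ℝ :=
  match p with
  | .L0 => ∑ t ∈ S, Δ t
  | .Lp n => (∑ t ∈ S, Δ t ^ (n : ℕ)) ^ (((n : ℕ) : ℝ)⁻¹)
  | .Linf => S.fold max 0 Δ
lemma pred_congr {d : ℕ} (t : DTree d) (a b : Fin d → ℝ)
    (h : ∀ f v, t.hasNode f v → (a f ≤ v ↔ b f ≤ v)) : t.pred a = t.pred b := by
  induction t with
  | leaf y => rfl
  | node f v tl tr ihl ihr =>
    have hr := h f v (Or.inl ⟨rfl, rfl⟩)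
    simp only [DTree.pred]
    by_cases hc : a f ≤ v
    · rw [if_pos hc, if_pos (hr.mp hc)]
      exact ihl fun f' v' hn => h f' v' (Or.inr (Or.inl hn))
    · rw [if_neg hc, if_neg fun hb => hc (hr.mpr hb)]
      exact ihr fun f' v' hn => h f' v' (Or.inr (Or.inr hn))

lemma pnorm_nonneg {d : ℕ} (p : PNorm) (δ : Fin d → ℝ) : 0 ≤ pnorm p δ := by
  cases p with
  | L0 => exact Nat.cast_nonneg _
  | Lp n => exact Real.rpow_nonneg (Finset.sum_nonneg fun i _ => by positivity) _
  | Linf => exact Real.iSup_nonneg fun i => abs_nonneg _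

lemma rpow_inv_natpow (n : ℕ+) {s : ℝ} (hs : 0 ≤ s) :
    (s ^ (((n : ℕ) : ℝ)⁻¹)) ^ (n : ℕ) = s := by
  rw [← Real.rpow_natCast (s ^ (((n : ℕ) : ℝ)⁻¹)) (n : ℕ), ← Real.rpow_mul hs,
    inv_mul_cancel₀ (by exact_mod_cast n.ne_zero), Real.rpow_one]

lemma scalarNorm_le_pnorm {d : ℕ} (p : PNorm) (δ : Fin d → ℝ) (i : Fin d) :
    scalarNorm p (δ i) ≤ pnorm p δ := by
  cases p with
  | L0 =>
    simp only [scalarNorm, pnorm]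
    split_ifs with h
    · exact Nat.cast_nonneg _
    · exact_mod_cast Nat.one_le_cast.mpr (Finset.card_pos.mpr ⟨i, by simp [h]⟩)
  | Lp n =>
    show |δ i| ≤ pnorm (.Lp n) δ
    simp only [pnorm]
    have h1 : |δ i| ^ (n : ℕ) ≤ ∑ j, |δ j| ^ (n : ℕ) :=
      Finset.single_le_sum (f := fun j => |δ j| ^ (n : ℕ)) (fun j _ => by positivity)
        (Finset.mem_univ i)
    have h2 := Real.rpow_le_rpow (by positivity) h1
      (by positivity : (0:ℝ) ≤ (((n:ℕ):ℝ))⁻¹)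
    calc |δ i| = (|δ i| ^ (n : ℕ)) ^ (((n:ℕ):ℝ)⁻¹) := by
          rw [← Real.rpow_natCast |δ i| (n : ℕ), ← Real.rpow_mul (abs_nonneg _),
            mul_inv_cancel₀ (by exact_mod_cast n.ne_zero), Real.rpow_one]
      _ ≤ _ := h2
  | Linf =>
    show |δ i| ≤ pnorm .Linf δ
    simp only [pnorm]
    exact le_ciSup (f := fun i => |δ i|) (Set.Finite.bddAbove (Set.finite_range _)) i

lemma pnorm_sel_le {d : ℕ} (p : PNorm) (δ δ' : Fin d → ℝ)
    (h : ∀ f, δ' f = δ f ∨ δ' f = 0) : pnorm p δ' ≤ pnorm p δ := by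
  have habs : ∀ f, |δ' f| ≤ |δ f| := fun f => by
    rcases h f with h' | h' <;> simp [h', abs_nonneg]
  cases p with
  | L0 =>
    simp only [pnorm]
    refine Nat.cast_le.mpr (Finset.card_le_card fun f hf => ?_)
    simp only [Finset.mem_filter, Finset.mem_univ, true_and] at hf ⊢
    rcases h f with h' | h'
    · rw [← h']; exact hf
    · exact absurd h' hf
  | Lp n =>
    simp only [pnorm]
    exact Real.rpow_le_rpow (by positivity)
      (Finset.sum_le_sum fun f _ => pow_le_pow_left₀ (abs_nonneg _) (habs f) _)
      (by positivity)
  | Linf =>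
    simp only [pnorm]
    exact Real.iSup_le
      (fun i => (habs i).trans
        (le_ciSup (f := fun j => |δ j|) (Set.Finite.bddAbove (Set.finite_range _)) i))
      (Real.iSup_nonneg fun i => abs_nonneg _)

/-- Let `T` be a tree ensemble with an odd number `m` of trees and `ψ_p(T) > 2k`, and
let `x` be an instance with label `y = T(x)`. For every tree `t ∈ T` that admits some
attack within budget `k` (some `δ` with `‖δ‖_p ≤ k` and `t (x + δ) ≠ y`), let `Δ t` be
the minimum `L_p` norm of such an attack. If there EXISTS a subset `S ⊆ T` with
`|S| = (m−1)/2 + 1` such that every tree in `S` admits an attack within budget `k` and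
`⊕_{t ∈ S} Δ t ≤ k`, then `T` is not stable on `x` for the attacker `A_{p,k}`, i.e.,
there exists `z ∈ A_{p,k}(x)` with `T(z) ≠ y`. -/
theorem stmt12 {d : ℕ} (p : PNorm) (k : ℝ) (hk : 0 ≤ k)
    (T : Finset (DTree d)) (hodd : Odd T.card) (hT : LargeSpread p k T)
    (x : Fin d → ℝ) (y : Bool) (hy : ensPred T x = y)
    (Δ : DTree d → ℝ)
    (hΔ : ∀ t ∈ T, (∃ δ : Fin d → ℝ, pnorm p δ ≤ k ∧ t.pred (x + δ) ≠ y) →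
      IsLeast {c : ℝ | ∃ δ : Fin d → ℝ,
        pnorm p δ ≤ k ∧ t.pred (x + δ) ≠ y ∧ c = pnorm p δ} (Δ t))
    (hex : ∃ S ⊆ T, S.card = (T.card - 1) / 2 + 1 ∧
      (∀ t ∈ S, ∃ δ : Fin d → ℝ, pnorm p δ ≤ k ∧ t.pred (x + δ) ≠ y) ∧
      combine p S Δ ≤ k) :
    ∃ z ∈ attacker p k x, ensPred T z ≠ y := by
  obtain ⟨S, hST, hScard, hSatk, hcomb⟩ := hex
  -- Step 1: for each tree in S, extract a normalized minimal attack.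
  have key : ∀ t ∈ S, ∃ δ : Fin d → ℝ,
      pnorm p δ ≤ Δ t ∧ Δ t ≤ k ∧ t.pred (x + δ) ≠ y ∧
      ∀ f, δ f ≠ 0 → ∃ v, t.hasNode f v ∧ |x f - v| ≤ |δ f| := by
    intro t ht
    obtain ⟨δ₀, hδk, hδp, hδe⟩ := (hΔ t (hST ht) (hSatk t ht)).1
    classical
    set Z : Fin d → Prop := fun f =>
      ∃ v, t.hasNode f v ∧ ¬((x f ≤ v) ↔ (x f + δ₀ f ≤ v)) with hZ
    refine ⟨fun f => if Z f then δ₀ f else 0, ?_, hδe ▸ hδk, ?_, ?_⟩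
    · rw [hδe]
      exact pnorm_sel_le p δ₀ _ fun f => by by_cases h : Z f <;> simp [h]
    · have hp : t.pred (x + fun f => if Z f then δ₀ f else 0) = t.pred (x + δ₀) := by
        refine pred_congr t _ _ fun f v hn => ?_
        simp only [Pi.add_apply]
        by_cases h : Z f
        · simp [h]
        · rw [if_neg h, add_zero]
          have hiff : (x f ≤ v ↔ x f + δ₀ f ≤ v) := by
            by_contra hc
            exact h ⟨v, hn, hc⟩
          exact hiff
      rw [hp]; exact hδp
    · intro f hf
      simp only at hf
      have hZf : Z f := by
        by_contra h; rw [if_neg h] at hf; exact hf rfl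
      have hval : (if Z f then δ₀ f else 0) = δ₀ f := if_pos hZf
      obtain ⟨v, hn, hiff⟩ := hZf
      refine ⟨v, hn, ?_⟩
      show |x f - v| ≤ |if Z f then δ₀ f else 0|
      rw [hval]
      rcases le_or_gt (x f) v with hA | hA
      · have hB : ¬(x f + δ₀ f ≤ v) := fun hB => hiff (iff_of_true hA hB)
        have h1 : |x f - v| = v - x f := by
          rw [abs_sub_comm]; exact abs_of_nonneg (by linarith)
        rw [h1]
        have : v < x f + δ₀ f := lt_of_not_ge hB
        linarith [le_abs_self (δ₀ f)]
      · have hB : x f + δ₀ f ≤ v := by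
          by_contra hB; exact hiff (iff_of_false (not_le.mpr hA) hB)
        have h1 : |x f - v| = x f - v := abs_of_nonneg (by linarith)
        rw [h1]
        linarith [neg_le_abs (δ₀ f)]
  choose! D hD1 hD2 hD4 hD5 using key
  have hDk : ∀ t ∈ S, pnorm p (D t) ≤ k := fun t ht => (hD1 t ht).trans (hD2 t ht)
  -- Step 2: minimal attacks of distinct trees have disjoint supports.
  have hdisj : ∀ t ∈ S, ∀ t' ∈ S, t ≠ t' → ∀ f, D t f ≠ 0 → D t' f = 0 := by
    intro t ht t' ht' hne f hf
    by_contra hf'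
    obtain ⟨v, hnv, hxv⟩ := hD5 t ht f hf
    obtain ⟨v', hnv', hxv'⟩ := hD5 t' ht' f hf'
    have hsp := hT t (hST ht) t' (hST ht') hne f v v' hnv hnv'
    cases p with
    | L0 =>
      have h1 : scalarNorm .L0 (v - v') ≤ 1 := by
        simp only [scalarNorm]; split_ifs <;> norm_num
      have h2 : (1:ℝ) ≤ pnorm .L0 (D t) := by
        simp only [pnorm]
        exact_mod_cast Nat.one_le_cast.mpr (Finset.card_pos.mpr ⟨f, by simp [hf]⟩)
      have h3 := hDk t ht
      linarith
    | Lp n =>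
      have h1 : |D t f| ≤ k := le_trans (scalarNorm_le_pnorm (.Lp n) (D t) f) (hDk t ht)
      have h2 : |D t' f| ≤ k := le_trans (scalarNorm_le_pnorm (.Lp n) (D t') f) (hDk t' ht')
      have h3 : scalarNorm (.Lp n) (v - v') = |v - v'| := rfl
      rw [h3] at hsp
      have h4 := abs_sub_le v (x f) v'
      rw [abs_sub_comm v (x f)] at h4
      linarith
    | Linf =>
      have h1 : |D t f| ≤ k := le_trans (scalarNorm_le_pnorm .Linf (D t) f) (hDk t ht)
      have h2 : |D t' f| ≤ k := le_trans (scalarNorm_le_pnorm .Linf (D t') f) (hDk t' ht')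
      have h3 : scalarNorm .Linf (v - v') = |v - v'| := rfl
      rw [h3] at hsp
      have h4 := abs_sub_le v (x f) v'
      rw [abs_sub_comm v (x f)] at h4
      linarith
  -- Step 3: combine the attacks coordinatewise.
  set δ : Fin d → ℝ := fun f => ∑ t ∈ S, D t f with hδdef
  have hsingle : ∀ f, ∀ t₀ ∈ S, D t₀ f ≠ 0 → δ f = D t₀ f := by
    intro f t₀ ht₀ h0
    exact Finset.sum_eq_single_of_mem t₀ ht₀ fun u hu hne => hdisj t₀ ht₀ u hu (Ne.symm hne) f h0
  have hzero : ∀ f, (∀ t ∈ S, D t f = 0) → δ f = 0 := fun f h => Finset.sum_eq_zero h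
  -- Step 4: the combined attack preserves each tree's comparisons w.r.t. its own attack.
  have hside : ∀ t ∈ S, ∀ f v, t.hasNode f v → ((x f + δ f ≤ v) ↔ (x f + D t f ≤ v)) := by
    intro t ht f v hnv
    by_cases hall : ∀ t' ∈ S, t' ≠ t → D t' f = 0
    · have heq : δ f = D t f := Finset.sum_eq_single_of_mem t ht fun u hu hne => hall u hu hne
      rw [heq]
    · push_neg at hall
      obtain ⟨t', ht', hne, hf'⟩ := hall
      have hDt : D t f = 0 := hdisj t' ht' t ht hne f hf'
      have hδf : δ f = D t' f := hsingle f t' ht' hf'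
      obtain ⟨v', hnv', hxv'⟩ := hD5 t' ht' f hf'
      have hsp := hT t (hST ht) t' (hST ht') hne.symm f v v' hnv hnv'
      rw [hδf, hDt, add_zero]
      cases p with
      | L0 =>
        exfalso
        have h1 : scalarNorm .L0 (v - v') ≤ 1 := by
          simp only [scalarNorm]; split_ifs <;> norm_num
        have h2 : (1:ℝ) ≤ pnorm .L0 (D t') := by
          simp only [pnorm]
          exact_mod_cast Nat.one_le_cast.mpr (Finset.card_pos.mpr ⟨f, by simp [hf']⟩)
        have h3 := hDk t' ht'
        linarith
      | Lp n =>
        have h1 : |D t' f| ≤ k := le_trans (scalarNorm_le_pnorm (.Lp n) (D t') f) (hDk t' ht')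
        have h3 : scalarNorm (.Lp n) (v - v') = |v - v'| := rfl
        rw [h3] at hsp
        have h4 := abs_sub_le v (x f) v'
        rw [abs_sub_comm v (x f)] at h4
        rcases le_or_gt (x f) v with hA | hA
        · refine iff_of_true ?_ hA
          have h5 : |x f - v| = v - x f := by
            rw [abs_sub_comm]; exact abs_of_nonneg (by linarith)
          linarith [le_abs_self (D t' f)]
        · refine iff_of_false ?_ (not_le.mpr hA)
          have h5 : |x f - v| = x f - v := abs_of_nonneg (by linarith)
          intro hc
          linarith [neg_le_abs (D t' f)]
      | Linf =>
        have h1 : |D t' f| ≤ k := le_trans (scalarNorm_le_pnorm .Linf (D t') f) (hDk t' ht')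
        have h3 : scalarNorm .Linf (v - v') = |v - v'| := rfl
        rw [h3] at hsp
        have h4 := abs_sub_le v (x f) v'
        rw [abs_sub_comm v (x f)] at h4
        rcases le_or_gt (x f) v with hA | hA
        · refine iff_of_true ?_ hA
          have h5 : |x f - v| = v - x f := by
            rw [abs_sub_comm]; exact abs_of_nonneg (by linarith)
          linarith [le_abs_self (D t' f)]
        · refine iff_of_false ?_ (not_le.mpr hA)
          have h5 : |x f - v| = x f - v := abs_of_nonneg (by linarith)
          intro hc
          linarith [neg_le_abs (D t' f)]
  -- Step 5: every tree in S is still fooled by the combined attack.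
  have hpredS : ∀ t ∈ S, t.pred (x + δ) ≠ y := by
    intro t ht
    have heq : t.pred (x + δ) = t.pred (x + D t) :=
      pred_congr t (x + δ) (x + D t) fun f v hn => by simpa using hside t ht f v hn
    rw [heq]; exact hD4 t ht
  -- Step 6: the combined attack is within budget.
  have hnorm : pnorm p δ ≤ k := by
    cases p with
    | L0 =>
      have hsub : (Finset.univ.filter fun f => δ f ≠ 0) ⊆
          S.biUnion fun t => Finset.univ.filter fun f => D t f ≠ 0 := by
        intro f hf
        simp only [Finset.mem_filter, Finset.mem_univ, true_and] at hf
        have hex : ∃ t ∈ S, D t f ≠ 0 := by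
          by_contra hcon
          push_neg at hcon
          exact hf (hzero f hcon)
        obtain ⟨t, ht, h0⟩ := hex
        exact Finset.mem_biUnion.mpr ⟨t, ht, Finset.mem_filter.mpr ⟨Finset.mem_univ f, h0⟩⟩
      calc pnorm .L0 δ = ((Finset.univ.filter fun f => δ f ≠ 0).card : ℝ) := rfl
        _ ≤ ((S.biUnion fun t => Finset.univ.filter fun f => D t f ≠ 0).card : ℝ) :=
            Nat.cast_le.mpr (Finset.card_le_card hsub)
        _ ≤ ((∑ t ∈ S, (Finset.univ.filter fun f => D t f ≠ 0).card : ℕ) : ℝ) :=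
            Nat.cast_le.mpr Finset.card_biUnion_le
        _ = ∑ t ∈ S, pnorm .L0 (D t) := by rw [Nat.cast_sum]; rfl
        _ ≤ ∑ t ∈ S, Δ t := Finset.sum_le_sum fun t ht => hD1 t ht
        _ = combine .L0 S Δ := rfl
        _ ≤ k := hcomb
    | Lp n =>
      have hpow : ∀ t ∈ S, ∑ f, |D t f| ^ (n:ℕ) ≤ Δ t ^ (n:ℕ) := by
        intro t ht
        have h1 : (0:ℝ) ≤ ∑ f, |D t f| ^ (n:ℕ) := Finset.sum_nonneg fun f _ => by positivity
        have h3 := pow_le_pow_left₀ (pnorm_nonneg (.Lp n) (D t)) (hD1 t ht) (n:ℕ)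
        rwa [show (pnorm (.Lp n) (D t)) ^ (n:ℕ) = ∑ f, |D t f| ^ (n:ℕ) from
          rpow_inv_natpow n h1] at h3
      have hterm : ∀ f, |δ f| ^ (n:ℕ) ≤ ∑ t ∈ S, |D t f| ^ (n:ℕ) := by
        intro f
        by_cases h0 : ∀ t ∈ S, D t f = 0
        · rw [hzero f h0, abs_zero, zero_pow n.ne_zero]
          exact Finset.sum_nonneg fun u _ => by positivity
        · push_neg at h0
          obtain ⟨t₀, ht₀, hf0⟩ := h0
          rw [hsingle f t₀ ht₀ hf0]
          exact Finset.single_le_sum (f := fun u => |D u f| ^ (n:ℕ))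
            (fun u _ => by positivity) ht₀
      have hsum : ∑ f, |δ f| ^ (n:ℕ) ≤ ∑ t ∈ S, Δ t ^ (n:ℕ) :=
        calc ∑ f, |δ f| ^ (n:ℕ) ≤ ∑ f, ∑ t ∈ S, |D t f| ^ (n:ℕ) :=
              Finset.sum_le_sum fun f _ => hterm f
          _ = ∑ t ∈ S, ∑ f, |D t f| ^ (n:ℕ) := Finset.sum_comm
          _ ≤ ∑ t ∈ S, Δ t ^ (n:ℕ) := Finset.sum_le_sum hpow
      calc pnorm (.Lp n) δ = (∑ f, |δ f| ^ (n:ℕ)) ^ (((n:ℕ):ℝ)⁻¹) := rfl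
        _ ≤ (∑ t ∈ S, Δ t ^ (n:ℕ)) ^ (((n:ℕ):ℝ)⁻¹) :=
            Real.rpow_le_rpow (Finset.sum_nonneg fun f _ => by positivity) hsum (by positivity)
        _ = combine (.Lp n) S Δ := rfl
        _ ≤ k := hcomb
    | Linf =>
      show (⨆ f, |δ f|) ≤ k
      refine Real.iSup_le (fun f => ?_) hk
      by_cases h0 : ∀ t ∈ S, D t f = 0
      · rw [hzero f h0, abs_zero]; exact hk
      · push_neg at h0
        obtain ⟨t₀, ht₀, hf0⟩ := h0
        rw [hsingle f t₀ ht₀ hf0]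
        exact le_trans (scalarNorm_le_pnorm .Linf (D t₀) f) (hDk t₀ ht₀)
  -- Step 7: conclude by majority counting.
  obtain ⟨r, hr⟩ := hodd
  have hrS : S.card = r + 1 := by omega
  refine ⟨x + δ, ?_, ?_⟩
  · show pnorm p ((x + δ) - x) ≤ k
    rwa [add_sub_cancel_left]
  · cases y with
    | false =>
      have hsub : S ⊆ T.filter fun t => t.pred (x + δ) = true := fun t ht =>
        Finset.mem_filter.mpr ⟨hST ht, by
          have h := hpredS t ht; revert h; cases t.pred (x + δ) <;> simp⟩
      have h1 : r + 1 ≤ (T.filter fun t => t.pred (x + δ) = true).card :=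
        hrS ▸ Finset.card_le_card hsub
      have h2 : T.card < 2 * (T.filter fun t => t.pred (x + δ) = true).card := by omega
      simp [ensPred, h2]
    | true =>
      have hsub : S ⊆ T.filter fun t => ¬(t.pred (x + δ) = true) := fun t ht =>
        Finset.mem_filter.mpr ⟨hST ht, hpredS t ht⟩
      have h1 : r + 1 ≤ (T.filter fun t => ¬(t.pred (x + δ) = true)).card :=
        hrS ▸ Finset.card_le_card hsub
      have h2 := Finset.card_filter_add_card_filter_not
        (s := T) (p := fun t => t.pred (x + δ) = true)
      have h3 : ¬(T.card < 2 * (T.filter fun t => t.pred (x + δ) = true).card) := by omega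
      simp [ensPred, h3]
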